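/- Let G be a k-extendable non-bipartite graph on ν vertices with k ≥ (ν+2)/4, and suppose S ⊆ V(G) with |S| = 2k is chosen so that G − S has no perfect matching and the induced subgraph G[S] has maximum matching size r₀ as large as possible among all such S. Then r₀ = k − 1. -/

import Mathlib

open SimpleGraph

/-- `G` has a matching with exactly `k` edges. -/
def HasMatchingOfSize {V : Type*} (G : SimpleGraph V) (k : ℕ) : Prop :=
  ∃ M : G.Subgraph, M.IsMatching ∧ M.edgeSet.ncard = k

/-- `G` is `k`-extendable: connected, has a matching of size `k`, and every
matching of size `k` extends to a perfect matching. -/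
def Extendable {V : Type*} (G : SimpleGraph V) (k : ℕ) : Prop :=
  G.Connected ∧ HasMatchingOfSize G k ∧
    ∀ M : G.Subgraph, M.IsMatching → M.edgeSet.ncard = k →
      ∃ M' : G.Subgraph, M ≤ M' ∧ M'.IsPerfectMatching

/-- `G` is `n`-factor-critical: deleting any `n` vertices leaves a graph with
a perfect matching. -/
def FactorCritical {V : Type*} [Fintype V] (G : SimpleGraph V) (n : ℕ) : Prop :=
  ∀ S : Finset V, S.card = n →
    ∃ M : (G.induce ((↑S : Set V)ᶜ)).Subgraph, M.IsPerfectMatching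

/-- `G` is `k½`-extendable: for every vertex `v`, `G - v` has a matching of
size `k`, and every matching of size `k` in `G - v` extends to a perfect
matching of `G - v`. -/
def HalfExtendable {V : Type*} (G : SimpleGraph V) (k : ℕ) : Prop :=
  ∀ v : V,
    HasMatchingOfSize (G.induce ({v}ᶜ : Set V)) k ∧
    ∀ M : (G.induce ({v}ᶜ : Set V)).Subgraph, M.IsMatching → M.edgeSet.ncard = k →
      ∃ M' : (G.induce ({v}ᶜ : Set V)).Subgraph, M ≤ M' ∧ M'.IsPerfectMatching

/-- The size of a maximum matching of `H`. -/
noncomputable def maxMatchSize {W : Type*} (H : SimpleGraph W) : ℕ :=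
  sSup {n | HasMatchingOfSize H n}

/-!
Write `r` for the matching number of `G[S]`. If `r ≥ k`, a `k`-edge matching of `G[S]` covers `S`,
and the perfect matching extending it restricts to a perfect matching of `G - S`; so `r < k`.

For `k ≤ r + 1`: an alternating path along a perfect matching of `G` augments a maximum matching
of `G[S]` to a matching `N` with `r + 1` edges on `S + w`, where `w ∉ S`, missing some `u ∈ S`.
By the maximality of `r`, `G - (S - u + w)` has a perfect matching `P'`. The rest is one count
used twice: if a perfect matching `Q` of `G` contains a matching `F` of `G - S`, the vertices of
`S` not matched inside `S` by `Q` are matched injectively to vertices of `G - S` missed by `F`, so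
`|S| ≤ 2r + |V(G - S) ∖ V(F)|`. With `F = ∅` this gives `k ≤ r + |P'|`, and `|P'| ≤ k` since
`ν ≤ 4k`; so `P'` plus `k - |P'|` edges of `N - w` is a matching with `k` edges. Extending it to
a perfect matching `Q` and taking for `F` the matching `P'` minus its edge at `u`, which misses
only two vertices of `G - S`, gives `2k ≤ 2r + 2`.
-/

namespace SimpleGraph.Subgraph

variable {V : Type*} {G : SimpleGraph V} {M N P : G.Subgraph} {s t : Set V} {a b u : V}

theorem IsMatching.deleteVerts (hM : M.IsMatching) (hs : ∀ ⦃v w⦄, M.Adj v w → v ∈ s → w ∈ s) :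
    (M.deleteVerts s).IsMatching := by
  rintro v ⟨hv, hvs⟩
  obtain ⟨w, hvw, huniq⟩ := hM hv
  have hws : w ∉ s := fun hws => hvs (hs hvw.symm hws)
  exact ⟨w, deleteVerts_adj.2 ⟨hv, hvs, M.edge_vert hvw.symm, hws, hvw⟩,
    fun y hy => huniq y (deleteVerts_adj.1 hy).2.2.2.2⟩

theorem IsMatching.deleteVerts_pair (hM : M.IsMatching) (hab : M.Adj a b) :
    (M.deleteVerts {a, b}).IsMatching :=
  hM.deleteVerts fun v w hvw hv => by
    rcases hv with rfl | rfl
    · exact .inr (hM.eq_of_adj_left hvw hab)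
    · exact .inl (hM.eq_of_adj_left hvw hab.symm)

theorem IsMatching.sup_of_disjoint (hM : M.IsMatching) (hN : N.IsMatching)
    (h : Disjoint M.verts N.verts) : (M ⊔ N).IsMatching :=
  hM.sup hN (by rwa [hM.support_eq_verts, hN.support_eq_verts])

theorem IsMatching.mem_verts_of_adj_of_le (hP : P.IsMatching) (hM : M.IsMatching) (hMP : M ≤ P)
    (hu : u ∈ M.verts) (hua : P.Adj u a) : a ∈ M.verts := by
  obtain ⟨w, huw, -⟩ := hM hu
  exact hP.eq_of_adj_left (hMP.2 huw) hua ▸ M.edge_vert huw.symm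

theorem IsPerfectMatching.exists_isMatching_verts_eq_compl (hP : P.IsPerfectMatching)
    (hM : M.IsMatching) (hMP : M ≤ P) : ∃ N : G.Subgraph, N.IsMatching ∧ N.verts = M.vertsᶜ :=
  ⟨P.deleteVerts M.verts,
    hP.1.deleteVerts fun _ _ hvw hv => hP.1.mem_verts_of_adj_of_le hM hMP hv hvw,
    by rw [deleteVerts_verts, hP.2.verts_eq_univ, Set.compl_eq_univ_sdiff]⟩

theorem IsMatching.comap_induce (hN : N.IsMatching)
    (ht : N.verts ⊆ t) : (N.comap (Embedding.induce t).toHom).IsMatching := by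
  intro v hv
  obtain ⟨w, hvw, huniq⟩ := hN hv
  refine ⟨⟨w, ht (N.edge_vert hvw.symm)⟩, ⟨N.adj_sub hvw, hvw⟩, fun y hy => ?_⟩
  exact Subtype.ext (huniq _ hy.2)

theorem map_comap_induce (ht : N.verts ⊆ t) :
    (N.comap (Embedding.induce t).toHom).map (Embedding.induce t).toHom = N := by
  ext v w
  · simpa using fun hv => ht hv
  · simp only [map_adj, comap_adj, Relation.Map]
    constructor
    · rintro ⟨a, b, ⟨-, hab⟩, rfl, rfl⟩
      exact hab
    · intro hvw
      exact ⟨⟨v, ht (N.edge_vert hvw)⟩, ⟨w, ht (N.edge_vert hvw.symm)⟩, ⟨N.adj_sub hvw, hvw⟩,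
        rfl, rfl⟩

theorem ncard_edgeSet_map_induce (H : (G.induce t).Subgraph) :
    (H.map (Embedding.induce t).toHom).edgeSet.ncard = H.edgeSet.ncard := by
  rw [edgeSet_map]
  exact Set.ncard_image_of_injective _ (Sym2.map.injective Subtype.val_injective)

variable [Finite V]

theorem ncard_edgeSet_sup_of_disjoint (h : Disjoint M.verts N.verts) :
    (M ⊔ N).edgeSet.ncard = M.edgeSet.ncard + N.edgeSet.ncard := by
  rw [edgeSet_sup]
  refine Set.ncard_union_eq (Set.disjoint_left.2 fun e heM heN => ?_)
  induction e with
  | h v w => exact Set.disjoint_left.1 h (M.edge_vert heM) (N.edge_vert heN)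

theorem IsMatching.ncard_le_ncard_of_forall_exists_adj {A B : Set V} (hM : M.IsMatching)
    (h : ∀ v ∈ A, ∃ w ∈ B, M.Adj v w) : A.ncard ≤ B.ncard := by
  choose! f hfB hf using h
  exact Set.ncard_le_ncard_of_injOn f hfB fun v hv v' hv' hvv' =>
    hM.eq_of_adj_right (hf v hv) (hvv' ▸ hf v' hv')

theorem IsMatching.ncard_verts (hM : M.IsMatching) : M.verts.ncard = 2 * M.edgeSet.ncard := by
  classical
  have := Fintype.ofFinite V
  rw [← Nat.card_coe_set_eq, ← Nat.card_coe_set_eq,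
    ← Nat.card_congr (Equiv.sigmaFiberEquiv hM.toEdge), Nat.card_sigma,
    Finset.sum_const_nat (m := 2), Finset.card_univ, Nat.card_eq_fintype_card, mul_comm]
  rintro ⟨e, he⟩ -
  induction e with
  | h v w =>
    change (hM.toEdge ⁻¹' {⟨s(v, w), he⟩}).ncard = 2
    rw [hM.toEdge_preimage_singleton he, Set.ncard_pair]
    simpa using he.ne

theorem IsMatching.ncard_edgeSet_deleteVerts_pair (hM : M.IsMatching) (hab : M.Adj a b) :
    (M.deleteVerts {a, b}).edgeSet.ncard + 1 = M.edgeSet.ncard := by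
  have hsub : {a, b} ⊆ M.verts := Set.pair_subset (M.edge_vert hab) (M.edge_vert hab.symm)
  have := Set.ncard_sdiff_add_ncard_of_subset hsub
  rw [← deleteVerts_verts, (hM.deleteVerts_pair hab).ncard_verts, hM.ncard_verts,
    Set.ncard_pair (M.adj_sub hab).ne] at this
  omega

theorem IsMatching.exists_le_ncard_edgeSet_eq (hM : M.IsMatching) {j : ℕ}
    (hj : j ≤ M.edgeSet.ncard) : ∃ N ≤ M, N.IsMatching ∧ N.edgeSet.ncard = j := by
  induction h : M.edgeSet.ncard generalizing M with
  | zero => exact ⟨M, le_rfl, hM, by omega⟩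
  | succ n ih =>
    rcases hj.eq_or_lt with hj | hj
    · exact ⟨M, le_rfl, hM, by omega⟩
    obtain ⟨e, he⟩ := Set.nonempty_of_ncard_ne_zero (s := M.edgeSet) (by omega)
    induction e with
    | h a b =>
      have hcard := hM.ncard_edgeSet_deleteVerts_pair he
      obtain ⟨N, hN, hNm, hNcard⟩ := ih (hM.deleteVerts_pair he) (by omega) (by omega)
      exact ⟨N, hN.trans deleteVerts_le, hNm, hNcard⟩

theorem IsPerfectMatching.exists_isMatching_augment (hP : P.IsPerfectMatching)
    (hM : M.IsMatching) (hu : u ∉ M.verts) :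
    ∃ w, ∃ N : G.Subgraph, N.IsMatching ∧ N.verts ⊆ insert w (insert u M.verts) ∧
      N.edgeSet.ncard = M.edgeSet.ncard + 1 := by
  induction h : (M.edgeSet \ P.edgeSet).ncard using Nat.strong_induction_on generalizing M u with
  | _ n ih =>
  obtain ⟨y, huy, -⟩ := hP.1 (hP.2 u)
  have hGuy := P.adj_sub huy
  by_cases hy : y ∈ M.verts
  · -- Swap the `M`-edge `yz` for the `P`-edge `uy`; the alternating path continues from `z`.
    obtain ⟨z, hyz, -⟩ := hM hy
    have hzu : z ≠ u := by rintro rfl; exact hu (M.edge_vert hyz.symm)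
    have hdisj : Disjoint (M.deleteVerts {y, z}).verts (G.subgraphOfAdj hGuy).verts := by
      rw [deleteVerts_verts, subgraphOfAdj_verts, Set.disjoint_left]
      rintro v ⟨hvM, hvyz⟩ (rfl | rfl)
      · exact hu hvM
      · exact hvyz (.inl rfl)
    set M' := M.deleteVerts {y, z} ⊔ G.subgraphOfAdj hGuy
    have hM' : M'.IsMatching :=
      (hM.deleteVerts_pair hyz).sup_of_disjoint (.subgraphOfAdj hGuy) hdisj
    have hM'card : M'.edgeSet.ncard = M.edgeSet.ncard := by
      rw [ncard_edgeSet_sup_of_disjoint hdisj, edgeSet_subgraphOfAdj, Set.ncard_singleton,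
        hM.ncard_edgeSet_deleteVerts_pair hyz]
    have hM'verts : M'.verts = (M.verts \ {y, z}) ∪ {u, y} := rfl
    have hzM' : z ∉ M'.verts := by
      rw [hM'verts]
      simp [hzu, (M.adj_sub hyz).ne.symm]
    have hlt : (M'.edgeSet \ P.edgeSet).ncard < n := by
      subst h
      refine Set.ncard_lt_ncard (Set.ssubset_iff_of_subset ?_ |>.2 ⟨s(y, z), ⟨hyz, ?_⟩, ?_⟩)
      · rintro e ⟨he, hPe⟩
        rw [edgeSet_sup] at he
        rcases he with he | he
        · exact ⟨edgeSet_mono deleteVerts_le he, hPe⟩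
        · rw [edgeSet_subgraphOfAdj, Set.mem_singleton_iff] at he
          exact absurd (he ▸ huy) hPe
      · exact fun hPyz => hzu (hP.1.eq_of_adj_left hPyz huy.symm)
      · exact fun hyz' => hzM' (M'.edge_vert hyz'.1.symm)
    obtain ⟨w, N, hN, hNv, hNcard⟩ := ih _ hlt hM' hzM' rfl
    refine ⟨w, N, hN, hNv.trans (Set.insert_subset_insert ?_), by rw [hNcard, hM'card]⟩
    rw [hM'verts]
    rintro v (rfl | ⟨hv, -⟩ | rfl | rfl)
    · exact .inr (M.edge_vert hyz.symm)
    · exact .inr hv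
    · exact .inl rfl
    · exact .inr hy
  · have hdisj : Disjoint M.verts (G.subgraphOfAdj hGuy).verts := by
      rw [subgraphOfAdj_verts, Set.disjoint_right]
      rintro v (rfl | rfl) <;> assumption
    refine ⟨y, _, hM.sup_of_disjoint (.subgraphOfAdj hGuy) hdisj, ?_, ?_⟩
    · rintro v (hv | rfl | rfl)
      · exact .inr (.inr hv)
      · exact .inr (.inl rfl)
      · exact .inl rfl
    · rw [ncard_edgeSet_sup_of_disjoint hdisj, edgeSet_subgraphOfAdj, Set.ncard_singleton]

end SimpleGraph.Subgraph

open Subgraph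

theorem bddAbove_setOf_hasMatchingOfSize {W : Type*} [Finite W] (H : SimpleGraph W) :
    BddAbove {n | HasMatchingOfSize H n} :=
  ⟨Nat.card (Sym2 W), by
    rintro _ ⟨M, -, rfl⟩
    exact Set.ncard_le_card _⟩

theorem le_maxMatchSize {W : Type*} [Finite W] {H : SimpleGraph W} {n : ℕ}
    (h : HasMatchingOfSize H n) : n ≤ maxMatchSize H :=
  le_csSup (bddAbove_setOf_hasMatchingOfSize H) h

theorem hasMatchingOfSize_maxMatchSize {W : Type*} [Finite W] (H : SimpleGraph W) :
    HasMatchingOfSize H (maxMatchSize H) :=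
  Nat.sSup_mem ⟨0, show HasMatchingOfSize H 0 from ⟨⊥, fun _ hv => hv.elim, by simp⟩⟩
    (bddAbove_setOf_hasMatchingOfSize H)

theorem Extendable.exists_isPerfectMatching {V : Type*} {G : SimpleGraph V} {k : ℕ}
    (h : Extendable G k) : ∃ P : G.Subgraph, P.IsPerfectMatching :=
  let ⟨_, ⟨M, hM, hMk⟩, hext⟩ := h
  (hext M hM hMk).imp fun _ hP => hP.2

section InducedMatchings

variable {V : Type*} {G : SimpleGraph V} {t : Set V}

theorem hasMatchingOfSize_induce_iff {n : ℕ} :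
    HasMatchingOfSize (G.induce t) n ↔
      ∃ N : G.Subgraph, N.IsMatching ∧ N.verts ⊆ t ∧ N.edgeSet.ncard = n := by
  constructor
  · rintro ⟨M, hM, rfl⟩
    exact ⟨_, hM.map _ Subtype.val_injective, by rintro _ ⟨v, -, rfl⟩; exact v.2,
      ncard_edgeSet_map_induce M⟩
  · rintro ⟨N, hN, ht, rfl⟩
    exact ⟨_, hN.comap_induce ht, by rw [← ncard_edgeSet_map_induce, map_comap_induce ht]⟩

theorem exists_isPerfectMatching_induce_iff :
    (∃ M : (G.induce t).Subgraph, M.IsPerfectMatching) ↔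
      ∃ N : G.Subgraph, N.IsMatching ∧ N.verts = t := by
  constructor
  · rintro ⟨M, hM, hspan⟩
    refine ⟨_, hM.map (Embedding.induce t).toHom Subtype.val_injective, ?_⟩
    simp only [map_verts, hspan.verts_eq_univ, Set.image_univ]
    exact Subtype.range_coe
  · rintro ⟨N, hN, rfl⟩
    exact ⟨_, hN.comap_induce le_rfl, fun v => v.2⟩

variable [Finite V]

theorem SimpleGraph.Subgraph.IsMatching.ncard_edgeSet_le_maxMatchSize {N : G.Subgraph}
    (hN : N.IsMatching) (ht : N.verts ⊆ t) : N.edgeSet.ncard ≤ maxMatchSize (G.induce t) :=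
  le_maxMatchSize (hasMatchingOfSize_induce_iff.2 ⟨N, hN, ht, rfl⟩)

theorem exists_isMatching_ncard_edgeSet_eq_maxMatchSize (G : SimpleGraph V) (t : Set V) :
    ∃ N : G.Subgraph, N.IsMatching ∧ N.verts ⊆ t ∧
      N.edgeSet.ncard = maxMatchSize (G.induce t) :=
  hasMatchingOfSize_induce_iff.1 (hasMatchingOfSize_maxMatchSize _)

end InducedMatchings

section LowerBound

variable {V : Type*} [Finite V] {G : SimpleGraph V} {S : Set V} {k : ℕ}

theorem ncard_le_two_mul_maxMatchSize_induce_add {P F : G.Subgraph} (hP : P.IsPerfectMatching)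
    (hF : F.IsMatching) (hFP : F ≤ P) (hFS : F.verts ⊆ Sᶜ) :
    S.ncard ≤ 2 * maxMatchSize (G.induce S) + (Sᶜ \ F.verts).ncard := by
  set C := {v ∈ S | ∀ w, P.Adj v w → w ∈ S}
  have hC : C.ncard ≤ 2 * maxMatchSize (G.induce S) := by
    have hCm : (P.deleteVerts Cᶜ).IsMatching := hP.1.deleteVerts fun v w hvw hv hw =>
      hv ⟨hw.2 v hvw.symm, fun x hvx => hP.1.eq_of_adj_left hvw hvx ▸ hw.1⟩
    have hCv : (P.deleteVerts Cᶜ).verts = C := by simp [hP.2.verts_eq_univ]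
    have := hCm.ncard_edgeSet_le_maxMatchSize (hCv.trans_subset fun v hv => hv.1)
    rw [← hCv, hCm.ncard_verts]
    omega
  have hSC : (S \ C).ncard ≤ (Sᶜ \ F.verts).ncard := by
    refine hP.1.ncard_le_ncard_of_forall_exists_adj fun v ⟨hvS, hvC⟩ => ?_
    obtain ⟨w, hvw, hwS⟩ : ∃ w, P.Adj v w ∧ w ∉ S := by
      by_contra! h
      exact hvC ⟨hvS, h⟩
    exact ⟨w, ⟨hwS, fun hwF => hFS (hP.1.mem_verts_of_adj_of_le hF hFP hwF hvw.symm) hvS⟩, hvw⟩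
  have := Set.ncard_sdiff_add_ncard_of_subset (show C ⊆ S from fun v hv => hv.1)
  omega

theorem maxMatchSize_induce_lt (hext : Extendable G k) (hS : S.ncard = 2 * k)
    (hnoPM : ¬ ∃ M : (G.induce Sᶜ).Subgraph, M.IsPerfectMatching) :
    maxMatchSize (G.induce S) < k := by
  rw [exists_isPerfectMatching_induce_iff] at hnoPM
  by_contra! hk
  obtain ⟨N, hN, hNS, hNcard⟩ := exists_isMatching_ncard_edgeSet_eq_maxMatchSize G S
  obtain ⟨N', hN'N, hN', hN'k⟩ := hN.exists_le_ncard_edgeSet_eq (hNcard ▸ hk)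
  have hN'S : N'.verts = S :=
    Set.eq_of_subset_of_ncard_le (hN'N.1.trans hNS) (by rw [hS, hN'.ncard_verts, hN'k])
  obtain ⟨Q, hN'Q, hQ⟩ := hext.2.2 N' hN' hN'k
  exact hnoPM (hN'S ▸ hQ.exists_isMatching_verts_eq_compl hN' hN'Q)

theorem exists_isMatching_ncard_edgeSet_eq_maxMatchSize_succ {P : G.Subgraph}
    (hP : P.IsPerfectMatching) (hS : 2 * maxMatchSize (G.induce S) < S.ncard) :
    ∃ w ∉ S, ∃ N : G.Subgraph, N.IsMatching ∧ w ∈ N.verts ∧ N.verts ⊆ insert w S ∧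
      N.edgeSet.ncard = maxMatchSize (G.induce S) + 1 := by
  obtain ⟨M, hM, hMS, hMcard⟩ := exists_isMatching_ncard_edgeSet_eq_maxMatchSize G S
  obtain ⟨u, huS, huM⟩ := Set.exists_mem_notMem_of_ncard_lt_ncard
    (show M.verts.ncard < S.ncard by rw [hM.ncard_verts, hMcard]; exact hS)
  obtain ⟨w, N, hN, hNv, hNcard⟩ := hP.exists_isMatching_augment hM huM
  have hNS : ¬ N.verts ⊆ S := fun h => by
    have := hN.ncard_edgeSet_le_maxMatchSize h
    omega
  obtain ⟨v, hvN, hvS⟩ := Set.not_subset.1 hNS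
  have hNw : N.verts ⊆ insert w S :=
    hNv.trans (Set.insert_subset_insert (Set.insert_subset huS hMS))
  obtain rfl : v = w := (hNw hvN).resolve_right hvS
  exact ⟨v, hvS, N, hN, hvN, hNw, by rw [hNcard, hMcard]⟩

theorem le_maxMatchSize_induce_add_one_of_exchange (hext : Extendable G k) (hS : S.ncard = 2 * k)
    (hSc : Sᶜ.ncard ≤ 2 * k) {u w : V} (hu : u ∈ S) (hw : w ∉ S) {M P' : G.Subgraph}
    (hM : M.IsMatching) (hMS : M.verts ⊆ S \ {u})
    (hMcard : M.edgeSet.ncard = maxMatchSize (G.induce S))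
    (hP' : P'.IsMatching) (hP'v : P'.verts = (insert w (S \ {u}))ᶜ) :
    k ≤ maxMatchSize (G.induce S) + 1 := by
  obtain ⟨P, hP⟩ := hext.exists_isPerfectMatching
  have hP'v' : P'.verts = insert u (Sᶜ \ {w}) := by
    rw [hP'v]
    ext v
    simp only [Set.mem_compl_iff, Set.mem_insert_iff, Set.mem_sdiff, Set.mem_singleton_iff]
    grind
  have hD : Sᶜ.ncard = 2 * P'.edgeSet.ncard := by
    rw [← hP'.ncard_verts, hP'v', Set.ncard_insert_of_notMem (fun h => h.1 hu),
      Set.ncard_sdiff_singleton_add_one hw]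
  have hkD : k ≤ maxMatchSize (G.induce S) + P'.edgeSet.ncard := by
    have := ncard_le_two_mul_maxMatchSize_induce_add (S := S) hP (F := ⊥)
      (fun _ hv => hv.elim) bot_le (by simp)
    simp only [verts_bot, Set.sdiff_empty] at this
    omega
  obtain ⟨X, hXM, hX, hXcard⟩ :=
    hM.exists_le_ncard_edgeSet_eq (j := k - P'.edgeSet.ncard) (by omega)
  have hdisj : Disjoint X.verts P'.verts := by
    rw [hP'v]
    exact Set.disjoint_compl_right_iff_subset.2 (hXM.1.trans (hMS.trans (Set.subset_insert _ _)))
  obtain ⟨P'', hKP'', hP''⟩ := hext.2.2 (X ⊔ P') (hX.sup_of_disjoint hP' hdisj)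
    (by rw [ncard_edgeSet_sup_of_disjoint hdisj, hXcard]; omega)
  obtain ⟨z, huz, -⟩ := hP' (hP'v' ▸ .inl rfl : u ∈ P'.verts)
  have hF := hP'.deleteVerts_pair huz
  have hFS : (P'.deleteVerts {u, z}).verts ⊆ Sᶜ := by
    rw [deleteVerts_verts, hP'v']
    rintro v ⟨rfl | hv, hvuz⟩
    · exact absurd (.inl rfl) hvuz
    · exact hv.1
  have hrest : Sᶜ \ (P'.deleteVerts {u, z}).verts ⊆ {w, z} := by
    rw [deleteVerts_verts, hP'v']
    rintro v ⟨hvS, hvF⟩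
    simp only [Set.mem_insert_iff, Set.mem_singleton_iff, Set.mem_sdiff] at hvF ⊢
    grind
  have := ncard_le_two_mul_maxMatchSize_induce_add hP'' hF
    (deleteVerts_le.trans (le_sup_right.trans hKP'')) hFS
  have := (Set.ncard_le_ncard hrest).trans (Set.ncard_insert_le w {z})
  rw [Set.ncard_singleton] at this
  omega

end LowerBound

theorem le_maxMatchSize_induce_add_one {V : Type*} [Fintype V] {G : SimpleGraph V} {k : ℕ}
    (hext : Extendable G k) {S : Finset V} (hS : S.card = 2 * k)
    (hSc : (↑S : Set V)ᶜ.ncard ≤ 2 * k) (hlt : maxMatchSize (G.induce (↑S : Set V)) < k)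
    (hmax : ∀ S' : Finset V, S'.card = 2 * k →
      (¬ ∃ M : (G.induce ((↑S' : Set V)ᶜ)).Subgraph, M.IsPerfectMatching) →
      maxMatchSize (G.induce (↑S' : Set V)) ≤ maxMatchSize (G.induce (↑S : Set V))) :
    k ≤ maxMatchSize (G.induce (↑S : Set V)) + 1 := by
  classical
  have hSn : (↑S : Set V).ncard = 2 * k := by rw [Set.ncard_coe_finset, hS]
  obtain ⟨P, hP⟩ := hext.exists_isPerfectMatching
  obtain ⟨w, hwS, N, hN, hwN, hNS, hNcard⟩ :=
    exists_isMatching_ncard_edgeSet_eq_maxMatchSize_succ (S := ↑S) hP (by omega)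
  obtain ⟨u, huS, huN⟩ : ∃ u ∈ S, u ∉ N.verts := by
    by_contra! h
    have := Set.ncard_le_ncard (Set.insert_subset hwN h)
    rw [Set.ncard_insert_of_notMem hwS, hN.ncard_verts, hNcard] at this
    omega
  have hNS' : N.verts ⊆ insert w (↑S \ {u}) := fun v hv =>
    (hNS hv).imp_right fun hvS => ⟨hvS, fun hvu => huN (hvu ▸ hv)⟩
  obtain ⟨x, hwx, -⟩ := hN hwN
  have hMS : (N.deleteVerts {w, x}).verts ⊆ ↑S \ {u} := fun v ⟨hvN, hvwx⟩ =>
    (hNS' hvN).resolve_left fun hvw => hvwx (.inl hvw)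
  have hS' : (↑(insert w (S.erase u)) : Set V) = insert w (↑S \ {u}) := by
    rw [Finset.coe_insert, Finset.coe_erase]
  obtain ⟨P', hP', hP'v⟩ :
      ∃ P' : G.Subgraph, P'.IsMatching ∧ P'.verts = (insert w (↑S \ {u}))ᶜ := by
    rw [← hS', ← exists_isPerfectMatching_induce_iff]
    by_contra hno
    have h1 := hmax _ (by
      rw [Finset.card_insert_of_notMem (fun h => hwS (Finset.mem_of_mem_erase h)),
        Finset.card_erase_of_mem huS, hS]
      omega) hno
    have h2 := hN.ncard_edgeSet_le_maxMatchSize (hS' ▸ hNS')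
    omega
  have := hN.ncard_edgeSet_deleteVerts_pair hwx
  exact le_maxMatchSize_induce_add_one_of_exchange hext hSn hSc huS hwS
    (hN.deleteVerts_pair hwx) hMS (by omega) hP' hP'v

theorem stmt14_general {V : Type*} [Fintype V] (G : SimpleGraph V) (k : ℕ)
    (hext : Extendable G k)
    (hk : Fintype.card V + 2 ≤ 4 * k)
    (S : Finset V) (hS : S.card = 2 * k)
    (hnoPM : ¬ ∃ M : (G.induce ((↑S : Set V)ᶜ)).Subgraph, M.IsPerfectMatching)
    (hmax : ∀ S' : Finset V, S'.card = 2 * k →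
      (¬ ∃ M : (G.induce ((↑S' : Set V)ᶜ)).Subgraph, M.IsPerfectMatching) →
      maxMatchSize (G.induce (↑S' : Set V)) ≤ maxMatchSize (G.induce (↑S : Set V))) :
    maxMatchSize (G.induce (↑S : Set V)) = k - 1 := by
  have hSn : (↑S : Set V).ncard = 2 * k := by rw [Set.ncard_coe_finset, hS]
  have hSc : (↑S : Set V)ᶜ.ncard ≤ 2 * k := by
    have := Set.ncard_add_ncard_compl (↑S : Set V)
    rw [hSn, Nat.card_eq_fintype_card] at this
    omega
  have hlt := maxMatchSize_induce_lt hext hSn hnoPM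
  have hle := le_maxMatchSize_induce_add_one hext hS hSc hlt hmax
  omega

/-- if `G` is `k`-extendable, non-bipartite, `k ≥ (ν+2)/4`, and `S` with
`|S| = 2k` is chosen with `G - S` having no perfect matching and `G[S]` of maximum
matching size as large as possible among such sets, then this size is `k - 1`. -/
theorem stmt14 {V : Type*} [Fintype V] (G : SimpleGraph V) (k : ℕ)
    (hext : Extendable G k) (hnb : ¬ G.Colorable 2)
    (hk : Fintype.card V + 2 ≤ 4 * k)
    (S : Finset V) (hS : S.card = 2 * k)
    (hnoPM : ¬ ∃ M : (G.induce ((↑S : Set V)ᶜ)).Subgraph, M.IsPerfectMatching)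
    (hmax : ∀ S' : Finset V, S'.card = 2 * k →
      (¬ ∃ M : (G.induce ((↑S' : Set V)ᶜ)).Subgraph, M.IsPerfectMatching) →
      maxMatchSize (G.induce (↑S' : Set V)) ≤ maxMatchSize (G.induce (↑S : Set V))) :
    maxMatchSize (G.induce (↑S : Set V)) = k - 1 :=
  stmt14_general G k hext hk S hS hnoPM hmax
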